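/- arXiv:1601.02083 — 7 statements merged into one kernel-verified Lean document; each statement's English description precedes it below -/
import Mathlib

section
/- For vertex operators X_B(α) = exp(Σ_{n odd} x_n α^n) exp(-2 Σ_{n odd} (∂_{x_n}/n) α^{-n}) acting on formal power series in x = (x_1, x_3, x_5, ...), and for |α| > |β|, one has X_B(α) X_B(β) = ((1-β/α)/(1+β/α)) · exp(Σ_{n odd} x_n(α^n+β^n)) · exp(-2 Σ_{n odd} (∂_{x_n}/n)(α^{-n}+β^{-n})) as operators. -/
/-- `oddSum x t = Σ_{n odd} x_n t^n`. -/
noncomputable def oddSum (x : ℕ → ℝ) (t : ℝ) : ℝ :=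
  ∑' n : ℕ, if Odd n then x n * t ^ n else 0

/-- The shift `x ↦ x - 2[α^{-1}]_o`, i.e. `x_n ↦ x_n - 2 α^{-n}/n` for odd `n`,
which realizes the action of the operator `exp(-2 Σ_{n odd} (∂_{x_n}/n) α^{-n})`. -/
noncomputable def shiftv (α : ℝ) (x : ℕ → ℝ) : ℕ → ℝ :=
  fun n => if Odd n then x n - 2 * α⁻¹ ^ n / n else x n

/-- The BKP vertex operator
`X_B(α) = exp(Σ_{n odd} x_n α^n) exp(-2 Σ_{n odd} (∂_{x_n}/n) α^{-n})`. -/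
noncomputable def XB (α : ℝ) (f : (ℕ → ℝ) → ℝ) : (ℕ → ℝ) → ℝ :=
  fun x => Real.exp (oddSum x α) * f (shiftv α x)

/-!
Applying `X_B(α)` after `X_B(β)` evaluates the prefactor `exp (Σ x_n β^n)` of `X_B(β)` at the
shifted point `x - 2[α⁻¹]_o`, which changes the exponent by `-2 Σ_{n odd} (β/α)^n / n`. For
`|β/α| < 1` this is the odd part of the logarithm series, `log ((1 - β/α) / (1 + β/α))`, whose
exponential is the scalar factor of the composition rule.
-/

lemma hasSum_odd_pow_div_of_abs_lt_one {t : ℝ} (ht : |t| < 1) :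
    HasSum (fun n : ℕ => if Odd n then t ^ n / n else 0)
      ((Real.log (1 + t) - Real.log (1 - t)) / 2) := by
  have hinj : Function.Injective (fun k : ℕ => 2 * k + 1) := fun a b hab => by
    simp only at hab
    omega
  have hzero : ∀ n ∉ Set.range (fun k : ℕ => 2 * k + 1),
      (if Odd n then t ^ n / (n : ℝ) else 0) = 0 := by
    intro n hn
    rw [if_neg]
    rintro ⟨k, rfl⟩
    exact hn ⟨k, rfl⟩
  refine (hinj.hasSum_iff hzero).mp
    (((Real.hasSum_log_sub_log_of_abs_lt_one ht).div_const 2).congr_fun fun k => ?_)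
  simp only [Function.comp, if_pos (odd_two_mul_add_one k)]
  push_cast
  ring

lemma abs_div_lt_one_of_abs_lt {α β : ℝ} (h : |β| < |α|) : |β / α| < 1 := by
  rw [abs_div, div_lt_one ((abs_nonneg β).trans_lt h)]
  exact h

lemma oddSum_shiftv {α β : ℝ} (h : |β| < |α|) {x : ℕ → ℝ}
    (hx : Summable fun n : ℕ => if Odd n then x n * β ^ n else 0) :
    oddSum (shiftv α x) β = oddSum x β + Real.log ((1 - β / α) / (1 + β / α)) := by
  have ht := abs_div_lt_one_of_abs_lt h
  obtain ⟨hlo, hhi⟩ := abs_lt.mp ht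
  have hshift : HasSum (fun n : ℕ => if Odd n then shiftv α x n * β ^ n else 0)
      (oddSum x β - 2 * ((Real.log (1 + β / α) - Real.log (1 - β / α)) / 2)) := by
    refine (hx.hasSum.sub ((hasSum_odd_pow_div_of_abs_lt_one ht).mul_left 2)).congr_fun
      fun n => ?_
    by_cases hn : Odd n
    · simp only [hn, if_true, shiftv, div_pow, inv_pow]
      ring
    · simp [hn]
  rw [oddSum, hshift.tsum_eq, Real.log_div (by linarith) (by linarith)]
  ring

theorem stmt4_general (α β : ℝ) (h : |β| < |α|) (f : (ℕ → ℝ) → ℝ) (x : ℕ → ℝ)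
    (hsb : Summable fun n : ℕ => if Odd n then x n * β ^ n else 0) :
    XB α (XB β f) x =
      (1 - β / α) / (1 + β / α) * Real.exp (oddSum x α + oddSum x β)
        * f (shiftv β (shiftv α x)) := by
  obtain ⟨hlo, hhi⟩ := abs_lt.mp (abs_div_lt_one_of_abs_lt h)
  have hfactor : 0 < (1 - β / α) / (1 + β / α) := div_pos (by linarith) (by linarith)
  simp only [XB]
  rw [oddSum_shiftv h hsb, Real.exp_add, Real.exp_add, Real.exp_log hfactor]
  ring

/-- Composition rule for vertex operators: for `|α| > |β|`,
`X_B(α) X_B(β) = ((1-β/α)/(1+β/α)) · exp(Σ_{n odd} x_n (α^n + β^n)) ·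
exp(-2 Σ_{n odd} (∂_{x_n}/n)(α^{-n} + β^{-n}))`, where the composite shift operator
acts by `x ↦ shiftv β (shiftv α x)`. -/
theorem stmt4 (α β : ℝ) (h : |β| < |α|) (f : (ℕ → ℝ) → ℝ) (x : ℕ → ℝ)
    (hsa : Summable fun n : ℕ => if Odd n then x n * α ^ n else 0)
    (hsb : Summable fun n : ℕ => if Odd n then x n * β ^ n else 0) :
    XB α (XB β f) x =
      (1 - β / α) / (1 + β / α) * Real.exp (oddSum x α + oddSum x β)
        * f (shiftv β (shiftv α x)) :=
  stmt4_general α β h f x hsb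
end

section
/- Applying the product of vertex operators to the constant function 1 gives X_B(α_1) ··· X_B(α_{2n}) · 1 = (∏_{i<j} (α_i - α_j)/(α_i + α_j)) · exp(Σ_{i=1}^{2n} Σ_{k odd} x_k α_i^k), valid for |α_1| > ··· > |α_{2n}|. -/
open Real

lemma hasSum_ite_odd_two_div_mul_pow {t : ℝ} (ht : |t| < 1) :
    HasSum (fun k : ℕ => if Odd k then 2 / (k : ℝ) * t ^ k else 0)
      (log (1 + t) - log (1 - t)) := by
  have hinj : Function.Injective (fun k : ℕ => 2 * k + 1) := fun a b hab => by
    dsimp only at hab; omega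
  have hzero : ∀ m ∉ Set.range (fun k : ℕ => 2 * k + 1),
      (if Odd m then 2 / (m : ℝ) * t ^ m else 0) = 0 := by
    rintro m hm
    rw [if_neg]
    rintro ⟨k, rfl⟩
    exact hm ⟨k, rfl⟩
  rw [← hinj.hasSum_iff hzero]
  convert hasSum_log_sub_log_of_abs_lt_one ht using 1
  funext k
  simp only [Function.comp, if_pos (odd_two_mul_add_one k)]
  push_cast
  ring

lemma ite_odd_shiftv_mul_pow (x : ℕ → ℝ) {a : ℝ} (ha : a ≠ 0) (b : ℝ) (k : ℕ) :
    (if Odd k then shiftv a x k * b ^ k else 0) =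
      (if Odd k then x k * b ^ k else 0) - (if Odd k then 2 / (k : ℝ) * (b / a) ^ k else 0) := by
  by_cases hk : Odd k
  · have hk0 : (k : ℝ) ≠ 0 := by exact_mod_cast hk.pos.ne'
    simp only [shiftv, if_pos hk, div_pow, inv_pow]
    field_simp
  · simp only [if_neg hk, sub_zero]

lemma abs_div_lt_one_of_abs_lt_s5 {a b : ℝ} (hab : |b| < |a|) : |b / a| < 1 := by
  rwa [abs_div, div_lt_one ((abs_nonneg b).trans_lt hab)]

lemma hasSum_oddSum_shiftv (x : ℕ → ℝ) {a b : ℝ} (hab : |b| < |a|)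
    (hx : Summable fun k : ℕ => if Odd k then x k * b ^ k else 0) :
    HasSum (fun k : ℕ => if Odd k then shiftv a x k * b ^ k else 0)
      (oddSum x b - (log (1 + b / a) - log (1 - b / a))) := by
  have ha : a ≠ 0 := abs_pos.mp ((abs_nonneg b).trans_lt hab)
  simp only [ite_odd_shiftv_mul_pow x ha b]
  exact hx.hasSum.sub (hasSum_ite_odd_two_div_mul_pow (abs_div_lt_one_of_abs_lt_s5 hab))

lemma exp_oddSum_shiftv (x : ℕ → ℝ) {a b : ℝ} (hab : |b| < |a|)
    (hx : Summable fun k : ℕ => if Odd k then x k * b ^ k else 0) :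
    exp (oddSum (shiftv a x) b) = (a - b) / (a + b) * exp (oddSum x b) := by
  have ha : a ≠ 0 := abs_pos.mp ((abs_nonneg b).trans_lt hab)
  obtain ⟨hlo, hhi⟩ := abs_lt.mp (abs_div_lt_one_of_abs_lt_s5 hab)
  have hplus : 0 < 1 + b / a := by linarith
  have hminus : 0 < 1 - b / a := by linarith
  rw [oddSum, (hasSum_oddSum_shiftv x hab hx).tsum_eq, exp_sub, exp_sub, exp_log hplus,
    exp_log hminus]
  field_simp

lemma summable_shiftv (x : ℕ → ℝ) {a b : ℝ} (hab : |b| < |a|)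
    (hx : Summable fun k : ℕ => if Odd k then x k * b ^ k else 0) :
    Summable fun k : ℕ => if Odd k then shiftv a x k * b ^ k else 0 :=
  (hasSum_oddSum_shiftv x hab hx).summable

/-- The factor `A_{1⋯m}` of the list `[α₁, …, αₘ]`. -/
noncomputable def pairwiseRatioProd : List ℝ → ℝ
  | [] => 1
  | a :: l => (l.map fun b => (a - b) / (a + b)).prod * pairwiseRatioProd l

lemma pairwiseRatioProd_ofFn {m : ℕ} (α : Fin m → ℝ) :
    pairwiseRatioProd (List.ofFn α)
      = ∏ i : Fin m, ∏ j : Fin m, if i < j then (α i - α j) / (α i + α j) else 1 := by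
  induction m with
  | zero => simp [pairwiseRatioProd]
  | succ m ih =>
    rw [List.ofFn_succ, pairwiseRatioProd, ih, Fin.prod_univ_succ, Fin.prod_univ_succ,
      if_neg (lt_irrefl _), one_mul, List.map_ofFn, List.prod_ofFn]
    refine congrArg₂ (· * ·) ?_ ?_
    · exact Finset.prod_congr rfl fun j _ => (if_pos (Fin.succ_pos j)).symm
    · refine Finset.prod_congr rfl fun i _ => ?_
      rw [Fin.prod_univ_succ, if_neg (Fin.succ_pos i).not_gt, one_mul]
      simp only [Fin.succ_lt_succ_iff]

lemma foldr_XB_one (L : List ℝ) (x : ℕ → ℝ) (hL : L.Pairwise fun a b => |b| < |a|)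
    (hx : ∀ a ∈ L, Summable fun k : ℕ => if Odd k then x k * a ^ k else 0) :
    L.foldr XB (fun _ => 1) x = pairwiseRatioProd L * exp (L.map (oddSum x)).sum := by
  induction L generalizing x with
  | nil => simp [pairwiseRatioProd]
  | cons a l ih =>
    obtain ⟨ha, hl⟩ := List.pairwise_cons.mp hL
    have hxl : ∀ b ∈ l, Summable fun k : ℕ => if Odd k then x k * b ^ k else 0 :=
      fun b hb => hx b (List.mem_cons_of_mem a hb)
    have hshift : exp (l.map (oddSum (shiftv a x))).sum
        = (l.map fun b => (a - b) / (a + b)).prod * exp (l.map (oddSum x)).sum := by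
      rw [exp_list_sum, exp_list_sum, List.map_map, List.map_map, ← List.prod_map_mul]
      exact congrArg List.prod <| List.map_congr_left fun b hb =>
        exp_oddSum_shiftv x (ha b hb) (hxl b hb)
    have hshifted := ih (shiftv a x) hl fun b hb => summable_shiftv x (ha b hb) (hxl b hb)
    rw [List.foldr_cons, XB, hshifted, hshift, pairwiseRatioProd, List.map_cons, List.sum_cons,
      exp_add]
    ring

/-- Applying a product of `2n` vertex operators to the constant function `1`:
for `|α_1| > ⋯ > |α_{2n}|`,
`X_B(α_1) ⋯ X_B(α_{2n}) · 1
  = (∏_{i<j} (α_i-α_j)/(α_i+α_j)) · exp(Σ_{i=1}^{2n} Σ_{k odd} x_k α_i^k)`. -/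
theorem stmt5 (n : ℕ) (α : Fin (2*n) → ℝ)
    (hmono : ∀ i j : Fin (2*n), i < j → |α j| < |α i|) (x : ℕ → ℝ)
    (hsum : ∀ i, Summable fun k : ℕ => if Odd k then x k * α i ^ k else 0) :
    ((List.ofFn α).foldr XB (fun _ => 1)) x =
      (∏ i : Fin (2*n), ∏ j : Fin (2*n), if i < j then (α i - α j) / (α i + α j) else 1)
        * Real.exp (∑ i : Fin (2*n), oddSum x (α i)) := by
  have hsorted : (List.ofFn α).Pairwise fun a b => |b| < |a| :=
    List.pairwise_ofFn.mpr hmono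
  have hsummable : ∀ a ∈ List.ofFn α, Summable fun k : ℕ => if Odd k then x k * a ^ k else 0 := by
    simpa only [List.forall_mem_ofFn_iff] using hsum
  rw [foldr_XB_one _ x hsorted hsummable, pairwiseRatioProd_ofFn, List.map_ofFn, List.sum_ofFn]
  rfl
end

section
/- Let λ = (λ_1 > ··· > λ_{2L-1} ≥ 1) be a strict partition and μ = (μ_1 > ··· > μ_{2L-1} ≥ 1) a strict partition with |μ| ≤ |λ| and μ ≠ λ. Define the pairing (Λ^{(i)}, Λ^{(j)}) = 0 and suppose (Λ^{(j)}, m) = 0 whenever m < λ_j. Then the Pfaffian (Λ^{(1)},...,Λ^{(2L-1)}, μ_1,...,μ_{2L-1}) = 0. -/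
/-!
Expand the Pfaffian along the row of `Λ^{(1)}`. Pairings with other `Λ^{(i)}` vanish, and so
does the pairing with `μ_k` unless `μ_k ≥ λ_1`. In the remaining terms the minor is again of the
same shape, for `λ_2 > ⋯` and `μ` with `μ_k` removed: the weight inequality survives because
`μ_k ≥ λ_1`, and if the remaining sequences agreed, the weight inequality would force
`μ_k = λ_1`, so `k = 1` by strictness and `μ = λ`. Induction on the length concludes, with the
weight `Sum.elim λ id` on the symbols.
-/

/-- Pfaffian of a skew-symmetric array of pairings on a list, via first-row expansion. -/
noncomputable def pfL {R : Type*} [CommRing R] {σ : Type*} (a : σ → σ → R) : List σ → R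
  | [] => 1
  | x :: xs => ∑ j : Fin xs.length,
      (-1 : R) ^ (j : ℕ) * a x (xs.get j) * pfL a (xs.eraseIdx j)
termination_by l => l.length
decreasing_by
  simp only [List.length_cons]
  have h1 : (xs.eraseIdx j).length ≤ xs.length := List.length_eraseIdx_le ..
  omega

open List

theorem List.eraseIdx_ne_of_pairwise_gt {l : ℕ} {ls ms : List ℕ}
    (hl : (l :: ls).Pairwise (· > ·)) (hm : ms.Pairwise (· > ·))
    (hsum : ms.sum ≤ l + ls.sum) (hne : ms ≠ l :: ls)
    {k : ℕ} (hk : k < ms.length) (hlk : l ≤ ms[k]) : ms.eraseIdx k ≠ ls := by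
  rintro rfl
  match ms, k with
  | m :: ms, 0 =>
    simp only [eraseIdx_cons_zero, getElem_cons_zero, sum_cons] at hne hlk hsum
    exact hne (by rw [show m = l by omega])
  | m :: ms, k + 1 =>
    simp only [length_cons, Nat.add_lt_add_iff_right, getElem_cons_succ] at hk hlk
    have hlm : m < l := (pairwise_cons.mp hl).1 m (by simp)
    have hmk : ms[k] < m := (pairwise_cons.mp hm).1 _ (getElem_mem hk)
    omega

section Pfaffian

variable {R σ : Type*} [CommRing R] (a : σ → σ → R) (w : σ → ℕ)

theorem pfL_append_eq_zero_of_weight : ∀ (xs ys : List σ), xs.length = ys.length →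
    (∀ x ∈ xs, ∀ y ∈ xs, a x y = 0) → (∀ x ∈ xs, ∀ y ∈ ys, w y < w x → a x y = 0) →
    (xs.map w).Pairwise (· > ·) → (ys.map w).Pairwise (· > ·) →
    (ys.map w).sum ≤ (xs.map w).sum → ys.map w ≠ xs.map w → pfL a (xs ++ ys) = 0
  | [], ys, hlen, _, _, _, _, _, hne => by
    obtain rfl : ys = [] := length_eq_zero_iff.mp hlen.symm
    simp at hne
  | x :: xs, ys, hlen, hxx, hxy, hxw, hyw, hsum, hne => by
    rw [cons_append, pfL]
    refine Finset.sum_eq_zero fun ⟨j, hj⟩ _ => ?_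
    simp only [get_eq_getElem, length_append] at hj ⊢
    rcases lt_or_ge j xs.length with hjx | hjx
    · rw [getElem_append_left hjx, hxx x mem_cons_self _ (mem_cons_of_mem _ (getElem_mem _))]
      ring
    obtain ⟨k, rfl⟩ := Nat.exists_eq_add_of_le hjx
    have hk : k < ys.length := by omega
    rw [getElem_append_right (by omega)]
    simp only [Nat.add_sub_cancel_left]
    rcases lt_or_ge (w ys[k]) (w x) with hlt | hge
    · rw [hxy x mem_cons_self _ (getElem_mem hk) hlt]
      ring
    have hsub : (ys.eraseIdx k).Sublist ys := eraseIdx_sublist _ _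
    have hsplit := CommMonoid.add_sum_eraseIdx (l := ys.map w) (i := k) (by simpa using hk)
    simp only [getElem_map, eraseIdx_map] at hsplit
    simp only [map_cons, sum_cons, pairwise_cons] at hsum hxw
    have hrest : pfL a (xs ++ ys.eraseIdx k) = 0 :=
      pfL_append_eq_zero_of_weight xs (ys.eraseIdx k)
        (by simp only [length_cons] at hlen; rw [length_eraseIdx_of_lt hk]; omega)
        (fun x hx y hy => hxx x (mem_cons_of_mem _ hx) y (mem_cons_of_mem _ hy))
        (fun x hx y hy => hxy x (mem_cons_of_mem _ hx) y (hsub.mem hy))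
        hxw.2 (hyw.sublist (hsub.map w)) (by omega)
        (by
          rw [← eraseIdx_map]
          exact eraseIdx_ne_of_pairwise_gt (by simpa using hxw) hyw (by simpa using hsum)
            (by simpa using hne) (by simpa using hk) (by simpa using hge))
    simp only [eraseIdx_append_of_length_le hjx, Nat.add_sub_cancel_left, hrest, mul_zero]
termination_by xs => xs.length

end Pfaffian

theorem stmt10_general {R : Type*} [CommRing R] (L : ℕ)
    (lam mu : Fin (2*L-1) → ℕ)
    (hlam : ∀ i j : Fin (2*L-1), i < j → lam j < lam i)
    (hmu : ∀ i j : Fin (2*L-1), i < j → mu j < mu i)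
    (hwt : ∑ i, mu i ≤ ∑ i, lam i) (hne : mu ≠ lam)
    (a : (Fin (2*L-1) ⊕ ℕ) → (Fin (2*L-1) ⊕ ℕ) → R)
    (hLL : ∀ i j : Fin (2*L-1), a (Sum.inl i) (Sum.inl j) = 0)
    (hvan : ∀ (j : Fin (2*L-1)) (m : ℕ), m < lam j → a (Sum.inl j) (Sum.inr m) = 0) :
    pfL a (List.ofFn (fun i : Fin (2*L-1) => Sum.inl i) ++
           List.ofFn (fun j : Fin (2*L-1) => Sum.inr (mu j))) = 0 := by
  have hxs : (ofFn fun i => Sum.inl i : List (Fin (2*L-1) ⊕ ℕ)).map (Sum.elim lam id) =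
      ofFn lam :=
    map_ofFn
  have hys : (ofFn fun j => Sum.inr (mu j) : List (Fin (2*L-1) ⊕ ℕ)).map (Sum.elim lam id) =
      ofFn mu :=
    map_ofFn
  refine pfL_append_eq_zero_of_weight a (Sum.elim lam id) _ _ (by simp) ?_ ?_ ?_ ?_ ?_ ?_
  · simpa only [forall_mem_ofFn_iff] using hLL
  · simpa only [forall_mem_ofFn_iff, Sum.elim_inl, Sum.elim_inr, id] using fun i j => hvan i (mu j)
  · rw [hxs, pairwise_ofFn]; exact hlam
  · rw [hys, pairwise_ofFn]; exact hmu
  · rwa [hxs, hys, sum_ofFn, sum_ofFn]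
  · rwa [hxs, hys, Ne, ofFn_inj]

/-- Let `λ = (λ_1 > ⋯ > λ_{2L-1} ≥ 1)` and `μ = (μ_1 > ⋯ > μ_{2L-1} ≥ 1)` be
strict partitions with `|μ| ≤ |λ|` and `μ ≠ λ`.  With a skew-symmetric pairing on
the symbols `Λ^{(i)}` (encoded `Sum.inl i`) and positive integers (encoded
`Sum.inr n`) satisfying `(Λ^{(i)},Λ^{(j)}) = 0` and `(Λ^{(j)}, m) = 0` for
`m < λ_j`, the Pfaffian `(Λ^{(1)},…,Λ^{(2L-1)},μ_1,…,μ_{2L-1})` vanishes. -/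
theorem stmt10 {R : Type*} [CommRing R] (L : ℕ) (hL : 1 ≤ L)
    (lam mu : Fin (2*L-1) → ℕ)
    (hlam : ∀ i j : Fin (2*L-1), i < j → lam j < lam i) (hlampos : ∀ i, 1 ≤ lam i)
    (hmu : ∀ i j : Fin (2*L-1), i < j → mu j < mu i) (hmupos : ∀ i, 1 ≤ mu i)
    (hwt : ∑ i, mu i ≤ ∑ i, lam i) (hne : mu ≠ lam)
    (a : (Fin (2*L-1) ⊕ ℕ) → (Fin (2*L-1) ⊕ ℕ) → R)
    (hskew : ∀ X Y, a X Y = - a Y X)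
    (hLL : ∀ i j : Fin (2*L-1), a (Sum.inl i) (Sum.inl j) = 0)
    (hvan : ∀ (j : Fin (2*L-1)) (m : ℕ), m < lam j → a (Sum.inl j) (Sum.inr m) = 0) :
    pfL a (List.ofFn (fun i : Fin (2*L-1) => Sum.inl i) ++
           List.ofFn (fun j : Fin (2*L-1) => Sum.inr (mu j))) = 0 :=
  stmt10_general L lam mu hlam hmu hwt hne a hLL hvan
end

section
/- Suppose the coefficients {ξ_μ}, indexed skew-symmetrically by finite sequences of distinct non-negative integers (at most one zero entry), satisfy the even addition-formula relations: for all even k+l ≥ 4 and all permutations (n_1,...,n_l), (m_1,...,m_k) of strict partitions, ξ_{(n_1,...,n_l)} ξ_{(m_1,...,m_k)} = Σ_{i=1}^{l-1} (-1)^{k+i-1} ξ_{(n_i,n_l,m_1,...,m_k)} ξ_{(n_1,...,n̂_i,...,n_{l-1})} + Σ_{i=1}^{k} (-1)^{i-1} ξ_{(n_l,m_1,...,m̂_i,...,m_k)} ξ_{(n_1,...,n_{l-1},m_i)}. Then, specializing l = k+4 with n_1 = m_1, ..., n_k = m_k (and m_i ≠ 0, n_j ≠ 0), the DJKM relations hold: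 ξ_{(m_1,...,m_k)} ξ_{(m_1,...,m_k,n_1,n_2,n_3,n_4)} = ξ_{(m_1,...,m_k,n_1,n_4)} ξ_{(m_1,...,m_k,n_2,n_3)} - ξ_{(m_1,...,m_k,n_2,n_4)} ξ_{(m_1,...,m_k,n_1,n_3)} + ξ_{(m_1,...,m_k,n_3,n_4)} ξ_{(m_1,...,m_k,n_1,n_2)}. -/
/-!
Apply the addition formula to the index sequences `(m, n₁, n₂)` and `(m, n₃, n₄)`, where
`m = (m_1, …, m_k)`. Every term of either sum that removes an entry of the common prefix `m`
repeats that entry in one of its factors and so vanishes; the three surviving terms, after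
moving `n₁, n₂` (a pair) or `n₂` (across the even-length `m`) back into place at no cost in
sign, are exactly the DJKM relation.
-/

theorem Fin.sum_getElem_eraseIdx_append_of_eq_zero {α M : Type*} [AddCommMonoid M]
    (ms tl : List α) (f : ℕ → α → List α → M) (hf : ∀ i (hi : i < ms.length) L, f i ms[i] L = 0) :
    ∑ i : Fin (ms ++ tl).length, f i (ms ++ tl)[(i : ℕ)] ((ms ++ tl).eraseIdx i) =
      ∑ j : Fin tl.length, f (ms.length + j) tl[(j : ℕ)] (ms ++ tl.eraseIdx j) := by
  rw [← Fin.sum_congr' _ List.length_append.symm, Fin.sum_univ_add]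
  simp [List.getElem_append_left, List.getElem_append_right, hf,
    List.eraseIdx_append_of_length_le]

section Skew

variable {α R : Type*} [CommRing R] {ξ : List α → R}
  (hskew : ∀ (l₁ l₂ : List α) (a b : α), ξ (l₁ ++ a :: b :: l₂) = -ξ (l₁ ++ b :: a :: l₂))
include hskew

theorem skew_move_right (L pre : List α) (x : α) (suf : List α) :
    ξ (pre ++ x :: (L ++ suf)) = (-1) ^ L.length * ξ (pre ++ L ++ x :: suf) := by
  induction L generalizing pre with
  | nil => simp
  | cons a t ih =>
    rw [List.cons_append, hskew, List.append_cons pre, ih, List.length_cons, pow_succ]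
    simp

theorem skew_move_pair_right (L : List α) (x y : α) (suf : List α) :
    ξ (x :: y :: (L ++ suf)) = ξ (L ++ x :: y :: suf) := by
  have hy := skew_move_right hskew L [x] y suf
  have hx := skew_move_right hskew L [] x (y :: suf)
  simp only [List.nil_append, List.cons_append] at hy hx
  rw [hy, hx, ← mul_assoc, ← pow_add, Even.neg_one_pow ⟨_, rfl⟩, one_mul]

theorem skew_move_right_of_even {L : List α} (hL : Even L.length) (x : α) (suf : List α) :
    ξ (x :: (L ++ suf)) = ξ (L ++ x :: suf) := by
  simpa [hL.neg_one_pow] using skew_move_right hskew L [] x suf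

end Skew

/-- Suppose the coefficients `ξ`, indexed skew-symmetrically by finite sequences
of distinct non-negative integers, satisfy the even addition-formula relations
(eq. (224) of the paper): writing the first index sequence as `ns ++ [nl]` (so
`n_l = nl`, `l = ns.length + 1`), for all even `k + l ≥ 4`,
`ξ_{(n_1,…,n_l)} ξ_{(m_1,…,m_k)}
 = Σ_{i=1}^{l-1} (-1)^{k+i-1} ξ_{(n_i,n_l,m_1,…,m_k)} ξ_{(n_1,…,n̂_i,…,n_{l-1})}
 + Σ_{i=1}^{k} (-1)^{i-1} ξ_{(n_l,m_1,…,m̂_i,…,m_k)} ξ_{(n_1,…,n_{l-1},m_i)}`.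
Then the DJKM relations hold (with `k` even and all entries nonzero). -/
theorem stmt12 {R : Type*} [CommRing R] (ξ : List ℕ → R)
    (hskew : ∀ (l1 l2 : List ℕ) (a b : ℕ), ξ (l1 ++ a :: b :: l2) = - ξ (l1 ++ b :: a :: l2))
    (hdup : ∀ l : List ℕ, ¬ l.Nodup → ξ l = 0)
    (H : ∀ (ns : List ℕ) (nl : ℕ) (ms : List ℕ),
      (ns ++ [nl]).Nodup → ms.Nodup → 1 ≤ ms.length →
      Even (ns.length + 1 + ms.length) → 4 ≤ ns.length + 1 + ms.length →
      ξ (ns ++ [nl]) * ξ ms =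
        (∑ i : Fin ns.length,
          (-1 : R) ^ (ms.length + (i : ℕ)) * ξ (ns.get i :: nl :: ms) * ξ (ns.eraseIdx i))
        + ∑ i : Fin ms.length,
          (-1 : R) ^ (i : ℕ) * ξ (nl :: ms.eraseIdx i) * ξ (ns ++ [ms.get i])) :
    ∀ (ms : List ℕ) (n1 n2 n3 n4 : ℕ), Even ms.length →
      (ms ++ [n1, n2, n3, n4]).Nodup →
      (∀ x ∈ ms ++ [n1, n2, n3, n4], x ≠ 0) →
      ξ ms * ξ (ms ++ [n1, n2, n3, n4]) =
        ξ (ms ++ [n1, n4]) * ξ (ms ++ [n2, n3])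
        - ξ (ms ++ [n2, n4]) * ξ (ms ++ [n1, n3])
        + ξ (ms ++ [n3, n4]) * ξ (ms ++ [n1, n2]) := by
  intro ms n1 n2 n3 n4 heven hnd _
  have key : ξ (ms ++ [n1, n2]) * ξ (ms ++ [n3, n4]) =
      ξ (n1 :: n2 :: (ms ++ [n3, n4])) * ξ ms + ξ (n2 :: (ms ++ [n4])) * ξ (ms ++ [n1, n3])
        - ξ (n2 :: (ms ++ [n3])) * ξ (ms ++ [n1, n4]) := by
    have h := H (ms ++ [n1]) n2 (ms ++ [n3, n4]) (hnd.sublist (by simp)) (hnd.sublist (by simp))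
      (by simp) (by simp) (by simp; omega)
    simp only [List.get_eq_getElem] at h
    rw [Fin.sum_getElem_eraseIdx_append_of_eq_zero ms [n1]
        (fun i a L => (-1 : R) ^ ((ms ++ [n3, n4]).length + i) * ξ (a :: n2 :: (ms ++ [n3, n4])) * ξ L)
        fun i _ L => by rw [hdup _ fun h => (List.nodup_cons.mp h).1 (by simp), mul_zero, zero_mul],
      Fin.sum_getElem_eraseIdx_append_of_eq_zero ms [n3, n4]
        (fun i a L => (-1 : R) ^ i * ξ (n2 :: L) * ξ (ms ++ [n1] ++ [a]))
        fun i _ L => by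
          rw [hdup _ fun h => List.disjoint_of_nodup_append h (by simp) (List.mem_singleton_self _),
            mul_zero]] at h
    simpa [Fin.sum_univ_two, pow_add, heven.neg_one_pow, sub_eq_add_neg, add_assoc] using h
  rw [skew_move_pair_right hskew ms n1 n2 [n3, n4], skew_move_right_of_even hskew heven n2 [n4],
    skew_move_right_of_even hskew heven n2 [n3]] at key
  linear_combination -key
end

section
/- Giambelli-type formula satisfies the addition relations: let pairings (Λ, Λ^{(i)}) = (Λ^{(i)}, Λ^{(j)}) = 0, (Λ, n), (Λ^{(i)}, n), (n_i, n_j) be a skew-symmetric array over a commutative ring, and for a sequence μ = (μ_1,...,μ_k) of distinct positive integers define ξ_μ = (Λ^ε, Λ^{(1)},...,Λ^{(M)}, μ_1,...,μ_k) (Pfaffian), where ε ∈ {0,1} is chosen so that ε + M + k is even and Λ^0 means Λ is omitted. Then for all k, l ≥ 1 with k + l ≥ 3 odd, ξ_{(n_1,...,n_l)} ξ_{(m_1,...,m_k)} = Σ_{i=1}^{l} (-1)^{i-1} ξ_{(n_i,m_1,...,m_k)} ξ_{(n_1,...,n̂_i,...,n_l)} + Σ_{i=1}^{k} (-1)^{l+i-1}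 ξ_{(m_1,...,m̂_i,...,m_k)} ξ_{(n_1,...,n_l,m_i)}. -/
/-- The Giambelli-type coefficients
`ξ_μ = (Λ^ε, Λ^{(1)},…,Λ^{(M)}, μ_1,…,μ_k)` where `ε ∈ {0,1}` is chosen so that
`ε + M + k` is even (`Λ^0` means `Λ` is omitted).  The symbol `Λ` is encoded as
`Sum.inl none`, `Λ^{(i)}` as `Sum.inl (some i)` and the integer `n` as `Sum.inr n`. -/
noncomputable def giam {R : Type*} [CommRing R] (M : ℕ)
    (a : (Option (Fin M) ⊕ ℕ) → (Option (Fin M) ⊕ ℕ) → R) (mu : List ℕ) : R :=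
  if Even (M + mu.length) then
    pfL a ((List.ofFn fun i : Fin M => Sum.inl (some i)) ++ mu.map Sum.inr)
  else
    pfL a (Sum.inl none :: ((List.ofFn fun i : Fin M => Sum.inl (some i)) ++ mu.map Sum.inr))

open Finset

namespace List

theorem eraseIdx_eraseIdx_of_le {α : Type*} :
    ∀ (l : List α) {p q : ℕ}, p ≤ q → (l.eraseIdx p).eraseIdx q = (l.eraseIdx (q + 1)).eraseIdx p
  | [], _, _, _ => by simp
  | _ :: _, 0, _, _ => by simp
  | _ :: l, p + 1, q + 1, h => by
    simp only [eraseIdx_cons_succ, eraseIdx_eraseIdx_of_le l (Nat.le_of_succ_le_succ h)]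

theorem getD_eraseIdx_of_lt {α : Type*} (l : List α) (d : α) {i j : ℕ} (h : i < j) :
    (l.eraseIdx j).getD i d = l.getD i d := by
  simp [getD_eq_getElem?_getD, getElem?_eraseIdx_of_lt h]

theorem getD_eraseIdx_of_ge {α : Type*} (l : List α) (d : α) {i j : ℕ} (h : j ≤ i) :
    (l.eraseIdx j).getD i d = l.getD (i + 1) d := by
  simp [getD_eq_getElem?_getD, getElem?_eraseIdx_of_ge h]

end List

section Pfaffian

variable {R : Type*} [CommRing R] {σ : Type*} (a : σ → σ → R)

lemma pfL_cons (d x : σ) (xs : List σ) : pfL a (x :: xs) =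
    ∑ j ∈ range xs.length, (-1) ^ j * a x (xs.getD j d) * pfL a (xs.eraseIdx j) := by
  rw [pfL, ← Fin.sum_univ_eq_sum_range
    (fun j => (-1 : R) ^ j * a x (xs.getD j d) * pfL a (xs.eraseIdx j))]
  simp

lemma pfL_cons_cons (d x y : σ) (v : List σ) :
    pfL a (x :: y :: v) = a x y * pfL a v + ∑ q ∈ range v.length, ∑ p ∈ range q,
      (-1) ^ (p + q) * (a x (v.getD p d) * a y (v.getD q d) - a x (v.getD q d) * a y (v.getD p d))
        * pfL a ((v.eraseIdx q).eraseIdx p) := by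
  set n := v.length
  let A : ℕ → ℕ → R := fun p q =>
    (-1) ^ (p + q) * (a x (v.getD p d) * a y (v.getD q d)) * pfL a ((v.eraseIdx q).eraseIdx p)
  let B : ℕ → ℕ → R := fun p q =>
    (-1) ^ (p + q) * (a x (v.getD q d) * a y (v.getD p d)) * pfL a ((v.eraseIdx q).eraseIdx p)
  have hterm : ∀ q ∈ range n, (-1) ^ (q + 1) * a x ((y :: v).getD (q + 1) d)
      * pfL a ((y :: v).eraseIdx (q + 1))
      = ∑ p ∈ Ico (q + 1) n, A q p - ∑ p ∈ range q, B p q := by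
    intro q hq
    have hq : q < n := mem_range.mp hq
    have hshift : ∑ p ∈ Ico (q + 1) n, A q p = ∑ k ∈ Ico q (n - 1), A q (k + 1) := by
      rw [sum_Ico_add' (A q), Nat.sub_add_cancel (by omega)]
    rw [List.getD_cons_succ, List.eraseIdx_cons_succ, pfL_cons a d,
      List.length_eraseIdx_of_lt hq, mul_sum, ← sum_range_add_sum_Ico _ (by omega : q ≤ n - 1),
      hshift, add_comm, sub_eq_add_neg, ← sum_neg_distrib]
    congr 1
    · refine sum_congr rfl fun p hp => ?_
      have hp : q ≤ p := (mem_Ico.mp hp).1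
      rw [List.getD_eraseIdx_of_ge _ _ hp, List.eraseIdx_eraseIdx_of_le _ hp]
      simp only [A, pow_succ]
      ring
    · refine sum_congr rfl fun p hp => ?_
      have hp : p < q := mem_range.mp hp
      rw [List.getD_eraseIdx_of_lt _ _ hp]
      simp only [B, pow_succ]
      ring
  rw [pfL_cons a d, List.length_cons, sum_range_succ', sum_congr rfl hterm, sum_sub_distrib,
    range_eq_Ico, sum_Ico_Ico_comm', ← sum_sub_distrib, ← range_eq_Ico]
  simp only [A, B]
  simp [add_comm, mul_sub, sub_mul]

lemma pfL_cons_cons_swap (hskew : ∀ x y, a x y = -a y x) (x y : σ) (v : List σ) :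
    pfL a (x :: y :: v) = -pfL a (y :: x :: v) := by
  rw [pfL_cons_cons a x, pfL_cons_cons a x, hskew x y, neg_add, ← sum_neg_distrib]
  congr 1
  · ring
  · refine sum_congr rfl fun q _ => ?_
    rw [← sum_neg_distrib]
    exact sum_congr rfl fun p _ => by ring

lemma pfL_cons_cons_self {x : σ} (hxx : a x x = 0) (v : List σ) : pfL a (x :: x :: v) = 0 := by
  rw [pfL_cons_cons a x, hxx, zero_mul, zero_add]
  exact sum_eq_zero fun q _ => sum_eq_zero fun p _ => by ring

-- Expand both sides along the head `z` of `l`, after swapping `x :: z :: _` to `z :: x :: _`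
-- on the right; the minors on the left are again of the form `_ ++ [x]`.
lemma pfL_append_singleton (hskew : ∀ x y, a x y = -a y x) (x : σ) (l : List σ) :
    pfL a (l ++ [x]) = (-1) ^ l.length * pfL a (x :: l) := by
  induction hn : l.length using Nat.strong_induction_on generalizing l with
  | _ n ih =>
  subst hn
  rcases l with _ | ⟨z, l⟩
  · simp
  have hrest : ∀ j ∈ range l.length, (-1) ^ j * a z ((l ++ [x]).getD j z)
      * pfL a ((l ++ [x]).eraseIdx j)
      = (-1) ^ l.length * ((-1) ^ (j + 1) * a z ((x :: l).getD (j + 1) z)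
        * pfL a ((x :: l).eraseIdx (j + 1))) := by
    intro j hj
    have hj : j < l.length := mem_range.mp hj
    rw [List.getD_append _ _ _ _ hj, List.eraseIdx_append_of_lt_length hj,
      ih _ (Nat.lt_succ_of_le (List.length_eraseIdx_le _ _)) _ rfl,
      List.length_eraseIdx_of_lt hj, List.getD_cons_succ, List.eraseIdx_cons_succ]
    have hsign : (-1 : R) ^ l.length = -(-1) ^ (l.length - 1) := by
      obtain ⟨m, hm⟩ : ∃ m, l.length = m + 1 := ⟨l.length - 1, by omega⟩
      rw [hm, Nat.add_sub_cancel, pow_succ]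
      ring
    rw [hsign]
    ring
  rw [List.cons_append, pfL_cons a z, List.length_append, List.length_singleton, sum_range_succ,
    sum_congr rfl hrest, ← mul_sum, pfL_cons_cons_swap a hskew, pfL_cons a z z (x :: l)]
  have hlast : (l ++ [x]).getD l.length z = x := by simp
  have hinit : (l ++ [x]).eraseIdx l.length = l := by
    simp [List.eraseIdx_append_of_length_le]
  simp only [List.length_cons, sum_range_succ', hlast, hinit, List.getD_cons_zero,
    List.eraseIdx_cons_zero]
  ring

lemma pfL_cons_eq_append_singleton (hskew : ∀ x y, a x y = -a y x) (x : σ) (l : List σ) :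
    pfL a (x :: l) = (-1) ^ l.length * pfL a (l ++ [x]) := by
  rw [pfL_append_singleton a hskew, ← mul_assoc, ← pow_add, Even.neg_one_pow ⟨_, rfl⟩, one_mul]

lemma pfL_append_comm (hskew : ∀ x y, a x y = -a y x) (l₁ l₂ : List σ) :
    pfL a (l₁ ++ l₂) = (-1) ^ (l₁.length * l₂.length) * pfL a (l₂ ++ l₁) := by
  induction l₁ generalizing l₂ with
  | nil => simp
  | cons x l₁ ih =>
    rw [List.cons_append, pfL_cons_eq_append_singleton a hskew, List.append_assoc, ih,
      List.append_assoc, List.singleton_append]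
    simp only [List.length_append, List.length_cons, List.length_nil, zero_add, ← mul_assoc,
      ← pow_add]
    congr 1
    rw [show l₁.length + l₂.length + l₁.length * (l₂.length + 1)
      = (l₁.length + 1) * l₂.length + 2 * l₁.length by ring, pow_add, pow_mul]
    simp

lemma pfL_append_cons_cons_swap (hskew : ∀ x y, a x y = -a y x) (u : List σ) (x y : σ)
    (v : List σ) : pfL a (u ++ x :: y :: v) = -pfL a (u ++ y :: x :: v) := by
  rw [pfL_append_comm a hskew, pfL_append_comm a hskew u, List.cons_append, List.cons_append,
    pfL_cons_cons_swap a hskew]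
  simp

lemma pfL_append_cons_cons_self (hskew : ∀ x y, a x y = -a y x) {x : σ} (hxx : a x x = 0)
    (u v : List σ) : pfL a (u ++ x :: x :: v) = 0 := by
  rw [pfL_append_comm a hskew, List.cons_append, List.cons_append, pfL_cons_cons_self a hxx,
    mul_zero]

lemma pfL_append_append_singleton (hskew : ∀ x y, a x y = -a y x) (u v : List σ) (x : σ) :
    pfL a (u ++ v ++ [x]) = (-1) ^ v.length * pfL a (u ++ x :: v) := by
  induction v generalizing u with
  | nil => simp
  | cons z v ih =>
    rw [← List.singleton_append, ← List.append_assoc, ih, List.append_assoc, List.singleton_append,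
      List.singleton_append, pfL_append_cons_cons_swap a hskew, List.length_cons, pow_succ]
    ring

lemma pfL_append_singleton_of_mem (hskew : ∀ x y, a x y = -a y x) {x : σ} (hxx : a x x = 0)
    {l : List σ} (hx : x ∈ l) : pfL a (l ++ [x]) = 0 := by
  obtain ⟨u, v, rfl⟩ := List.append_of_mem hx
  rw [← List.singleton_append, ← List.append_assoc, pfL_append_append_singleton a hskew,
    List.append_assoc, List.singleton_append, pfL_append_cons_cons_self a hskew hxx, mul_zero]

lemma pfL_append_singleton_eq_sum (hskew : ∀ x y, a x y = -a y x) (d : σ) (l : List σ) (x : σ) :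
    pfL a (l ++ [x]) = ∑ j ∈ range l.length,
      (-1) ^ (l.length + 1 + j) * a (l.getD j d) x * pfL a (l.eraseIdx j) := by
  rw [pfL_append_singleton a hskew, pfL_cons a d, mul_sum]
  refine sum_congr rfl fun j _ => ?_
  rw [hskew x, pow_add, pow_add]
  ring

/-- The default `d` of `List.getD` is never read. -/
noncomputable def pluckerSum (d : σ) (X Y : List σ) : R :=
  ∑ r ∈ range Y.length, (-1) ^ r * (pfL a (X ++ [Y.getD r d]) * pfL a (Y.eraseIdx r))

/-- Expanding along the appended entry turns both halves into the same double sum over pairs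
`(X_s, Y_r)`, with opposite signs. -/
theorem pluckerSum_add_pluckerSum (hskew : ∀ x y, a x y = -a y x) (d : σ) (X Y : List σ)
    (hXY : Even (X.length + Y.length)) : pluckerSum a d X Y + pluckerSum a d Y X = 0 := by
  have hsign : (-1 : R) ^ X.length = (-1) ^ Y.length := neg_one_pow_congr (Nat.even_add.mp hXY)
  have hX : ∀ r ∈ range Y.length,
      (-1) ^ r * (pfL a (X ++ [Y.getD r d]) * pfL a (Y.eraseIdx r))
      = ∑ s ∈ range X.length, (-1) ^ (r + s + 1) * (-1) ^ X.length
        * a (X.getD s d) (Y.getD r d) * pfL a (X.eraseIdx s) * pfL a (Y.eraseIdx r) := by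
    intro r _
    rw [pfL_append_singleton_eq_sum a hskew d, sum_mul, mul_sum]
    exact sum_congr rfl fun s _ => by ring
  have hY : ∀ s ∈ range X.length,
      (-1) ^ s * (pfL a (Y ++ [X.getD s d]) * pfL a (X.eraseIdx s))
      = ∑ r ∈ range Y.length, -((-1) ^ (r + s + 1) * (-1) ^ Y.length
        * a (X.getD s d) (Y.getD r d) * pfL a (X.eraseIdx s) * pfL a (Y.eraseIdx r)) := by
    intro s _
    rw [pfL_append_singleton_eq_sum a hskew d, sum_mul, mul_sum]
    exact sum_congr rfl fun r _ => by rw [hskew (Y.getD r d)]; ring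
  rw [pluckerSum, pluckerSum, sum_congr rfl hX, sum_congr rfl hY, sum_comm (s := range X.length),
    ← sum_add_distrib]
  refine sum_eq_zero fun r _ => ?_
  rw [← sum_add_distrib]
  refine sum_eq_zero fun s _ => ?_
  rw [hsign]
  ring

end Pfaffian

section Giambelli

variable {R : Type*} [CommRing R] {M : ℕ} (a : (Option (Fin M) ⊕ ℕ) → (Option (Fin M) ⊕ ℕ) → R)

/-- The list `Λ^{(1)}, …, Λ^{(M)}, μ_1, …, μ_k` whose Pfaffian, possibly preceded by `Λ`,
is `ξ_μ`. -/
def giamSeq (M : ℕ) (mu : List ℕ) : List (Option (Fin M) ⊕ ℕ) :=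
  (List.ofFn fun i : Fin M => Sum.inl (some i)) ++ mu.map Sum.inr

@[simp] lemma length_giamSeq (mu : List ℕ) : (giamSeq M mu).length = M + mu.length := by
  simp [giamSeq]

lemma giamSeq_append_singleton (mu : List ℕ) (n : ℕ) :
    giamSeq M (mu ++ [n]) = giamSeq M mu ++ [Sum.inr n] := by
  simp [giamSeq]

lemma giam_of_even {mu : List ℕ} (h : Even (M + mu.length)) :
    giam M a mu = pfL a (giamSeq M mu) := by
  rw [giam, if_pos h, giamSeq]

lemma giam_of_odd {mu : List ℕ} (h : Odd (M + mu.length)) :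
    giam M a mu = pfL a (Sum.inl none :: giamSeq M mu) := by
  rw [giam, if_neg (Nat.not_even_iff_odd.mpr h), giamSeq]

lemma inl_some_mem_giamSeq (i : Fin M) (mu : List ℕ) : Sum.inl (some i) ∈ giamSeq M mu :=
  List.mem_append_left _ (List.mem_ofFn.mpr ⟨i, rfl⟩)

lemma sum_giamSeq (mu : List ℕ) (F : (Option (Fin M) ⊕ ℕ) → List (Option (Fin M) ⊕ ℕ) → R)
    (hF : ∀ i l, F (Sum.inl (some i)) l = 0) :
    ∑ r ∈ range (giamSeq M mu).length,
        (-1) ^ r * F ((giamSeq M mu).getD r (Sum.inr 0)) ((giamSeq M mu).eraseIdx r)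
      = ∑ j ∈ range mu.length,
        (-1) ^ (M + j) * F (Sum.inr (mu.getD j 0)) (giamSeq M (mu.eraseIdx j)) := by
  have hlen : (List.ofFn fun i : Fin M => (Sum.inl (some i) : Option (Fin M) ⊕ ℕ)).length = M :=
    List.length_ofFn
  rw [length_giamSeq, sum_range_add]
  have hP : ∀ r ∈ range M,
      (-1) ^ r * F ((giamSeq M mu).getD r (Sum.inr 0)) ((giamSeq M mu).eraseIdx r) = 0 := by
    intro r hr
    have hr : r < M := mem_range.mp hr
    rw [giamSeq, List.getD_append _ _ _ _ (by rw [hlen]; exact hr),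
      List.getD_eq_getElem _ _ (by rw [hlen]; exact hr), List.getElem_ofFn, hF, mul_zero]
  rw [sum_eq_zero hP, zero_add]
  refine sum_congr rfl fun j _ => ?_
  simp only [giamSeq]
  rw [List.getD_append_right _ _ _ _ (by omega),
    List.eraseIdx_append_of_length_le (by omega), hlen, Nat.add_sub_cancel_left,
    List.getD_map, List.eraseIdx_map]

variable (hskew : ∀ x y, a x y = -a y x)
include hskew

lemma giam_append_singleton (mu : List ℕ) (n : ℕ) :
    giam M a (mu ++ [n]) = (-1) ^ mu.length * giam M a (n :: mu) := by
  have hseq : giamSeq M (mu ++ [n]) = (List.ofFn fun i : Fin M => Sum.inl (some i))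
      ++ mu.map Sum.inr ++ [Sum.inr n] := by
    simp [giamSeq]
  have hseq' : giamSeq M (n :: mu) = (List.ofFn fun i : Fin M => Sum.inl (some i))
      ++ Sum.inr n :: mu.map Sum.inr := rfl
  rcases Nat.even_or_odd (M + (mu.length + 1)) with h | h
  · rw [giam_of_even a (by simpa using h), giam_of_even a (by simpa using h), hseq, hseq',
      pfL_append_append_singleton a hskew, List.length_map]
  · rw [giam_of_odd a (by simpa using h), giam_of_odd a (by simpa using h), hseq, hseq',
      ← List.cons_append, ← List.cons_append, pfL_append_append_singleton a hskew,
      List.length_map, List.cons_append]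

variable {a} (hdiag : ∀ i : Fin M, a (Sum.inl (some i)) (Sum.inl (some i)) = 0)
include hdiag

lemma pluckerSum_giamSeq {X : List (Option (Fin M) ⊕ ℕ)} (hX : ∀ i : Fin M, Sum.inl (some i) ∈ X)
    (mu : List ℕ) :
    pluckerSum a (Sum.inr 0) X (giamSeq M mu) = ∑ j ∈ range mu.length, (-1) ^ (M + j)
      * (pfL a (X ++ [Sum.inr (mu.getD j 0)]) * pfL a (giamSeq M (mu.eraseIdx j))) :=
  sum_giamSeq mu (fun y l => pfL a (X ++ [y]) * pfL a l) fun i _ => by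
    rw [pfL_append_singleton_of_mem a hskew (hdiag i) (hX i), zero_mul]

lemma pluckerSum_cons_giamSeq {X : List (Option (Fin M) ⊕ ℕ)}
    (hX : ∀ i : Fin M, Sum.inl (some i) ∈ X) (mu : List ℕ) :
    pluckerSum a (Sum.inr 0) X (Sum.inl none :: giamSeq M mu)
      = pfL a (X ++ [Sum.inl none]) * pfL a (giamSeq M mu)
        - ∑ j ∈ range mu.length, (-1) ^ (M + j) * (pfL a (X ++ [Sum.inr (mu.getD j 0)])
          * pfL a (Sum.inl none :: giamSeq M (mu.eraseIdx j))) := by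
  rw [pluckerSum, List.length_cons, sum_range_succ', ← sum_giamSeq mu
    (fun y l => pfL a (X ++ [y]) * pfL a (Sum.inl none :: l)) fun i _ => by
      rw [pfL_append_singleton_of_mem a hskew (hdiag i) (hX i), zero_mul],
    sub_eq_neg_add, ← sum_neg_distrib]
  simp only [List.getD_cons_succ, List.eraseIdx_cons_succ, List.getD_cons_zero,
    List.eraseIdx_cons_zero, pow_succ]
  simp

lemma giam_mul_giam_of_even {ns ms : List ℕ} (hns : Even (M + ns.length))
    (hodd : Odd (ns.length + ms.length)) :
    giam M a ns * giam M a ms = (-1) ^ ns.length *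
      (∑ j ∈ range ms.length,
          (-1) ^ j * (giam M a (ms.eraseIdx j) * giam M a (ns ++ [ms.getD j 0]))
        - ∑ i ∈ range ns.length,
          (-1) ^ i * (giam M a (ns.eraseIdx i) * giam M a (ms ++ [ns.getD i 0]))) := by
  have hms : Odd (M + ms.length) := by grind
  have hsign : (-1 : R) ^ M = (-1) ^ ns.length := neg_one_pow_congr (Nat.even_add.mp hns)
  have key := pluckerSum_add_pluckerSum a hskew (Sum.inr 0) (Sum.inl none :: giamSeq M ns)
    (giamSeq M ms) (by grind [length_giamSeq])
  rw [pluckerSum_giamSeq hskew hdiag (fun i => List.mem_cons_of_mem _ (inl_some_mem_giamSeq i ns)),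
    pluckerSum_cons_giamSeq hskew hdiag (fun i => inl_some_mem_giamSeq i ms)] at key
  have hfirst : ∀ j ∈ range ms.length, (-1) ^ (M + j)
      * (pfL a ((Sum.inl none :: giamSeq M ns) ++ [Sum.inr (ms.getD j 0)])
        * pfL a (giamSeq M (ms.eraseIdx j)))
      = (-1) ^ ns.length
        * ((-1) ^ j * (giam M a (ms.eraseIdx j) * giam M a (ns ++ [ms.getD j 0]))) := by
    intro j hj
    have hj : j < ms.length := mem_range.mp hj
    rw [giam_of_odd a (mu := ns ++ [ms.getD j 0]) (by grind),
      giam_of_even a (mu := ms.eraseIdx j) (by rw [List.length_eraseIdx_of_lt hj]; grind),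
      List.cons_append, giamSeq_append_singleton, pow_add, hsign]
    ring
  have hlast : ∀ i ∈ range ns.length, (-1) ^ (M + i)
      * (pfL a (giamSeq M ms ++ [Sum.inr (ns.getD i 0)])
        * pfL a (Sum.inl none :: giamSeq M (ns.eraseIdx i)))
      = (-1) ^ ns.length
        * ((-1) ^ i * (giam M a (ns.eraseIdx i) * giam M a (ms ++ [ns.getD i 0]))) := by
    intro i hi
    have hi : i < ns.length := mem_range.mp hi
    rw [giam_of_even a (mu := ms ++ [ns.getD i 0]) (by grind),
      giam_of_odd a (mu := ns.eraseIdx i) (by rw [List.length_eraseIdx_of_lt hi]; grind),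
      giamSeq_append_singleton, pow_add, hsign]
    ring
  have hmid : pfL a (giamSeq M ms ++ [Sum.inl none]) = -giam M a ms := by
    rw [pfL_append_singleton a hskew, length_giamSeq, hms.neg_one_pow, giam_of_odd a hms,
      neg_one_mul]
  rw [sum_congr rfl hfirst, sum_congr rfl hlast, hmid, ← giam_of_even a hns,
    ← mul_sum, ← mul_sum] at key
  linear_combination -key

lemma giam_mul_giam {ns ms : List ℕ} (hodd : Odd (ns.length + ms.length)) :
    giam M a ns * giam M a ms = (-1) ^ ns.length *
      (∑ j ∈ range ms.length,
          (-1) ^ j * (giam M a (ms.eraseIdx j) * giam M a (ns ++ [ms.getD j 0]))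
        - ∑ i ∈ range ns.length,
          (-1) ^ i * (giam M a (ns.eraseIdx i) * giam M a (ms ++ [ns.getD i 0]))) := by
  rcases Nat.even_or_odd (M + ns.length) with hns | hns
  · exact giam_mul_giam_of_even hskew hdiag hns hodd
  · have hms : Even (M + ms.length) := by grind
    have hsign : (-1 : R) ^ ms.length = -(-1) ^ ns.length := by
      rw [neg_one_pow_congr (n := ns.length + 1) (by grind), pow_succ, mul_neg_one]
    rw [mul_comm, giam_mul_giam_of_even hskew hdiag hms (by rwa [add_comm]), hsign]
    ring

end Giambelli

lemma Fin.sum_univ_get_eq_sum_range_getD {R α : Type*} [AddCommMonoid R] (l : List α) (d : α)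
    (f : ℕ → α → R) :
    ∑ i : Fin l.length, f i (l.get i) = ∑ i ∈ range l.length, f i (l.getD i d) := by
  rw [← Fin.sum_univ_eq_sum_range]
  simp

theorem stmt13_general {R : Type*} [CommRing R] (M : ℕ)
    (a : (Option (Fin M) ⊕ ℕ) → (Option (Fin M) ⊕ ℕ) → R)
    (hskew : ∀ X Y, a X Y = - a Y X)
    (hLL : ∀ i j : Option (Fin M), a (Sum.inl i) (Sum.inl j) = 0)
    (ns ms : List ℕ)
    (hodd : Odd (ns.length + ms.length)) :
    giam M a ns * giam M a ms =
      (∑ i : Fin ns.length,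
        (-1 : R) ^ (i : ℕ) * giam M a (ns.get i :: ms) * giam M a (ns.eraseIdx i))
      + ∑ i : Fin ms.length,
        (-1 : R) ^ (ns.length + (i : ℕ)) * giam M a (ms.eraseIdx i)
          * giam M a (ns ++ [ms.get i]) := by
  have hsign : (-1 : R) ^ ns.length * (-1) ^ ms.length = -1 := by
    rw [← pow_add, hodd.neg_one_pow]
  rw [Fin.sum_univ_get_eq_sum_range_getD ns 0 (fun i n => (-1 : R) ^ i * giam M a (n :: ms)
      * giam M a (ns.eraseIdx i)),
    Fin.sum_univ_get_eq_sum_range_getD ms 0 (fun i m => (-1 : R) ^ (ns.length + i)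
      * giam M a (ms.eraseIdx i) * giam M a (ns ++ [m])),
    giam_mul_giam hskew (fun i => hLL _ _) hodd, mul_sub, mul_sum, mul_sum, sub_eq_neg_add,
    ← sum_neg_distrib]
  congr 1
  · refine sum_congr rfl fun i _ => ?_
    rw [giam_append_singleton a hskew]
    linear_combination (-(-1) ^ i * giam M a (ns.eraseIdx i) * giam M a (ns.getD i 0 :: ms)) * hsign
  · exact sum_congr rfl fun j _ => by ring

/-- The Giambelli-type formula satisfies the odd addition relations: with a
skew-symmetric pairing satisfying `(Λ,Λ^{(i)}) = (Λ^{(i)},Λ^{(j)}) = 0`, for all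
sequences of distinct positive integers `(n_1,…,n_l)`, `(m_1,…,m_k)` with
`k, l ≥ 1` and `k + l ≥ 3` odd,
`ξ_{(n_1,…,n_l)} ξ_{(m_1,…,m_k)}
 = Σ_{i=1}^{l} (-1)^{i-1} ξ_{(n_i,m_1,…,m_k)} ξ_{(n_1,…,n̂_i,…,n_l)}
 + Σ_{i=1}^{k} (-1)^{l+i-1} ξ_{(m_1,…,m̂_i,…,m_k)} ξ_{(n_1,…,n_l,m_i)}`. -/
theorem stmt13 {R : Type*} [CommRing R] (M : ℕ)
    (a : (Option (Fin M) ⊕ ℕ) → (Option (Fin M) ⊕ ℕ) → R)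
    (hskew : ∀ X Y, a X Y = - a Y X)
    (hLL : ∀ i j : Option (Fin M), a (Sum.inl i) (Sum.inl j) = 0)
    (ns ms : List ℕ) (hns : ns.Nodup) (hms : ms.Nodup)
    (hnpos : ∀ x ∈ ns, 0 < x) (hmpos : ∀ x ∈ ms, 0 < x)
    (hl : 1 ≤ ns.length) (hk : 1 ≤ ms.length) (hodd : Odd (ns.length + ms.length)) :
    giam M a ns * giam M a ms =
      (∑ i : Fin ns.length,
        (-1 : R) ^ (i : ℕ) * giam M a (ns.get i :: ms) * giam M a (ns.eraseIdx i))
      + ∑ i : Fin ms.length,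
        (-1 : R) ^ (ns.length + (i : ℕ)) * giam M a (ms.eraseIdx i)
          * giam M a (ns ++ [ms.get i]) :=
  stmt13_general M a hskew hLL ns ms hodd
end

section
/- Uniqueness of coefficients: let λ = (λ_1 > ··· > λ_{2L-1} ≥ 1) be a strict partition. Suppose ring-valued skew-symmetric coefficients ξ on finite sequences of distinct non-negative integers satisfy ξ_λ = 1, ξ_μ = 0 for |μ| < |λ|, and the relations (A) for even l: ξ_{(n_1,...,n_l)} = Σ_{i=1}^{l} (-1)^{i-1} ξ_{(n_i,λ_1,...,λ_{2L-1})} ξ_{(n_1,...,n̂_i,...,n_l)}, and (B) for odd l: ξ_{(n_1,...,n_l)} = Σ_{i=1}^{l-1} (-1)^i ξ_{(n_i,n_l,λ_1,...,λ_{2L-1})} ξ_{(n_1,...,n̂_i,...,n_{l-1})} + Σ_{i=1}^{2L-1} (-1)^{i-1} ξ_{(n_l,λ_1,...,λ̂_i,...,λ_{2L-1})} ξ_{(n_1,...,n_{l-1},λ_i)}. Then every ξ_{(n_1,...,n_l)} is uniquely determined as a polynomial in the values ξ_{(λ_1,...,λ̂_i,...,λ_{2L-1},n)} (n > λ_i),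 ξ_{(λ_1,...,λ_{2L-1},n)}, and ξ_{(λ_1,...,λ_{2L-1},n_1,n_2)}. -/
/-- Skew-symmetry of a family of coefficients indexed by finite sequences:
transposing two adjacent entries changes the sign, and the value vanishes when
two entries coincide. -/
def SkewCoeff {R : Type*} [CommRing R] (ξ : List ℕ → R) : Prop :=
  (∀ (l1 l2 : List ℕ) (a b : ℕ), ξ (l1 ++ a :: b :: l2) = - ξ (l1 ++ b :: a :: l2)) ∧
  (∀ l : List ℕ, ¬ l.Nodup → ξ l = 0)

/-- Relation (A) (for even `l`):
`ξ_{(n_1,…,n_l)} = Σ_{i=1}^{l} (-1)^{i-1} ξ_{(n_i,λ_1,…,λ_{2L-1})} ξ_{(n_1,…,n̂_i,…,n_l)}`. -/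
def RelA {R : Type*} [CommRing R] (L : ℕ) (lam : Fin (2*L-1) → ℕ) (ξ : List ℕ → R) : Prop :=
  ∀ ns : List ℕ, ns.Nodup → (∀ x ∈ ns, 0 < x) → Even ns.length → ns ≠ [] →
    ξ ns = ∑ i : Fin ns.length,
      (-1 : R) ^ (i : ℕ) * ξ (ns.get i :: List.ofFn lam) * ξ (ns.eraseIdx i)

/-- Relation (B) (for odd `l`, writing the sequence as `ns ++ [nl]` with
`ns.length` even):
`ξ_{(n_1,…,n_l)} = Σ_{i=1}^{l-1} (-1)^i ξ_{(n_i,n_l,λ_1,…,λ_{2L-1})} ξ_{(n_1,…,n̂_i,…,n_{l-1})}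
 + Σ_{i=1}^{2L-1} (-1)^{i-1} ξ_{(n_l,λ_1,…,λ̂_i,…,λ_{2L-1})} ξ_{(n_1,…,n_{l-1},λ_i)}`. -/
def RelB {R : Type*} [CommRing R] (L : ℕ) (lam : Fin (2*L-1) → ℕ) (ξ : List ℕ → R) : Prop :=
  ∀ (ns : List ℕ) (nl : ℕ), (ns ++ [nl]).Nodup → (∀ x ∈ ns ++ [nl], 0 < x) →
    Even ns.length →
    ξ (ns ++ [nl]) =
      (∑ i : Fin ns.length,
        (-1 : R) ^ ((i : ℕ) + 1) * ξ (ns.get i :: nl :: List.ofFn lam) * ξ (ns.eraseIdx i))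
      + ∑ i : Fin (2*L-1),
        (-1 : R) ^ (i : ℕ) * ξ (nl :: (List.ofFn lam).eraseIdx i) * ξ (ns ++ [lam i])

/-!
Induct on the weight of a sequence: its length plus the number of its entries outside `λ`.
A sequence all of whose entries lie in `λ` is either a permutation of `λ`, so its coefficient is
`±ξ_λ = ±1`, or of smaller degree than `λ`, so its coefficient vanishes. Otherwise pick an entry
`x ∉ λ`. For even length, relation (A) writes `ξ` through shorter sequences and the initial
values `ξ_{(n,λ)}`. For odd length, move `x` to the end and apply (B): the sequences
`(n_1,…,n̂_i,…,n_{l-1})` are shorter, the sequences `(n_1,…,n_{l-1},λ_i)` trade `x` for an entry of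
`λ`, and the coefficients `ξ_{(n_i,x,λ)}` and `ξ_{(x,λ_1,…,λ̂_i,…)}` are initial values, except
when `x < λ_i`, where the degree drops below `|λ|` and the coefficient vanishes.
-/

theorem List.Subperm.sum_lt_sum_of_length_lt {M : Type*} [AddCommMonoid M] [PartialOrder M]
    [IsOrderedCancelAddMonoid M] {l₁ l₂ : List M} (h : l₁.Subperm l₂)
    (hlen : l₁.length < l₂.length) (hpos : ∀ x ∈ l₂, 0 < x) : l₁.sum < l₂.sum := by
  obtain ⟨k, hk, hsub⟩ := h
  obtain ⟨r, hr⟩ := hsub.exists_perm_append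
  have hr_ne : r ≠ [] := by
    rintro rfl
    have := hr.length_eq
    simp only [List.append_nil, hk.length_eq] at this
    omega
  have hr_pos : 0 < r.sum :=
    List.sum_pos r (fun x hx => hpos x (hr.mem_iff.2 (List.mem_append_right _ hx))) hr_ne
  rw [← hk.sum_eq, hr.sum_eq, List.sum_append]
  exact lt_add_of_pos_right _ hr_pos

namespace SkewCoeff

variable {R : Type*} [CommRing R] {ξ ξ' : List ℕ → R}

theorem cons (hs : SkewCoeff ξ) (x : ℕ) : SkewCoeff (fun l => ξ (x :: l)) :=
  ⟨fun l₁ l₂ a b => hs.1 (x :: l₁) l₂ a b,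
    fun _ hl => hs.2 _ fun h => hl (List.nodup_cons.1 h).2⟩

theorem exists_eq_mul_of_perm {m m' : List ℕ} (h : m.Perm m') :
    ∃ c : R, ∀ ξ : List ℕ → R, SkewCoeff ξ → ξ m = c * ξ m' := by
  induction h with
  | nil => exact ⟨1, fun _ _ => (one_mul _).symm⟩
  | cons x _ ih =>
    obtain ⟨c, hc⟩ := ih
    exact ⟨c, fun ξ hξ => hc _ (hξ.cons x)⟩
  | swap a b t => exact ⟨-1, fun ξ hξ => by simpa using hξ.1 [] t b a⟩
  | trans _ _ ih₁ ih₂ =>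
    obtain ⟨c₁, hc₁⟩ := ih₁
    obtain ⟨c₂, hc₂⟩ := ih₂
    exact ⟨c₁ * c₂, fun ξ hξ => by rw [hc₁ ξ hξ, hc₂ ξ hξ, mul_assoc]⟩

theorem eq_of_perm (hs : SkewCoeff ξ) (hs' : SkewCoeff ξ') {m m' : List ℕ} (hp : m.Perm m')
    (h : ξ m' = ξ' m') : ξ m = ξ' m := by
  obtain ⟨c, hc⟩ := exists_eq_mul_of_perm (R := R) hp
  rw [hc ξ hs, hc ξ' hs', h]

theorem eq_of_not_nodup (hs : SkewCoeff ξ) (hs' : SkewCoeff ξ') {m : List ℕ} (h : ¬ m.Nodup) :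
    ξ m = ξ' m := by
  rw [hs.2 m h, hs'.2 m h]

end SkewCoeff

/-- Entries outside `lamL` count twice, so that trading one of them for an entry of `lamL`
lowers the weight. -/
def outsideWeight (lamL l : List ℕ) : ℕ := l.length + l.countP (· ∉ lamL)

section OutsideWeight

variable {lamL : List ℕ}

theorem outsideWeight_perm {l l' : List ℕ} (h : l.Perm l') :
    outsideWeight lamL l = outsideWeight lamL l' := by
  simp only [outsideWeight, h.length_eq, h.countP_eq]

theorem outsideWeight_eraseIdx_lt {l : List ℕ} {i : ℕ} (hi : i < l.length) :
    outsideWeight lamL (l.eraseIdx i) < outsideWeight lamL l := by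
  have hlen := List.length_eraseIdx_add_one hi
  have hcount := (l.eraseIdx_sublist i).countP_le (p := fun x => decide (x ∉ lamL))
  unfold outsideWeight
  omega

theorem outsideWeight_lt_append_singleton (l : List ℕ) (x : ℕ) :
    outsideWeight lamL l < outsideWeight lamL (l ++ [x]) := by
  simp only [outsideWeight, List.length_append, List.countP_append, List.length_singleton]
  omega

theorem outsideWeight_append_singleton_lt {x y : ℕ} (hx : x ∉ lamL) (hy : y ∈ lamL)
    (l : List ℕ) : outsideWeight lamL (l ++ [y]) < outsideWeight lamL (l ++ [x]) := by
  simp [outsideWeight, hx, hy]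

end OutsideWeight

section InitialValues

variable {R : Type*} [CommRing R] {ξ ξ' : List ℕ → R} {k : ℕ} {lam : Fin k → ℕ}

theorem eq_of_sum_lt (hs : SkewCoeff ξ) (hs' : SkewCoeff ξ')
    (h0 : ∀ l : List ℕ, l.Nodup → l.sum < ∑ i, lam i → ξ l = 0)
    (h0' : ∀ l : List ℕ, l.Nodup → l.sum < ∑ i, lam i → ξ' l = 0)
    {l : List ℕ} (hl : l.sum < ∑ i, lam i) : ξ l = ξ' l := by
  by_cases hnd : l.Nodup
  · rw [h0 l hnd hl, h0' l hnd hl]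
  · exact hs.eq_of_not_nodup hs' hnd

theorem eq_of_forall_mem_ofFn (hs : SkewCoeff ξ) (hs' : SkewCoeff ξ')
    (hlampos : ∀ i, 0 < lam i)
    (h1 : ξ (List.ofFn lam) = 1) (h1' : ξ' (List.ofFn lam) = 1)
    (h0 : ∀ l : List ℕ, l.Nodup → l.sum < ∑ i, lam i → ξ l = 0)
    (h0' : ∀ l : List ℕ, l.Nodup → l.sum < ∑ i, lam i → ξ' l = 0)
    {m : List ℕ} (hnd : m.Nodup) (hsub : ∀ x ∈ m, x ∈ List.ofFn lam) : ξ m = ξ' m := by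
  have hsp : m.Subperm (List.ofFn lam) := hnd.subperm hsub
  rcases lt_or_ge m.length (List.ofFn lam).length with hlt | hge
  · refine eq_of_sum_lt hs hs' h0 h0' ?_
    rw [← List.sum_ofFn]
    refine hsp.sum_lt_sum_of_length_lt hlt fun x hx => ?_
    obtain ⟨i, rfl⟩ := List.mem_ofFn.1 hx
    exact hlampos i
  · exact hs.eq_of_perm hs' (hsp.perm_of_length_le hge) (h1.trans h1'.symm)

theorem eq_cons_ofFn (hs : SkewCoeff ξ) (hs' : SkewCoeff ξ')
    (e2 : ∀ n : ℕ, 0 < n → ξ (List.ofFn lam ++ [n]) = ξ' (List.ofFn lam ++ [n]))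
    {n : ℕ} (hn : 0 < n) : ξ (n :: List.ofFn lam) = ξ' (n :: List.ofFn lam) := by
  by_cases hmem : n ∈ List.ofFn lam
  · exact hs.eq_of_not_nodup hs' fun h => (List.nodup_cons.1 h).1 hmem
  · exact hs.eq_of_perm hs' (List.perm_append_singleton n _).symm (e2 n hn)

theorem eq_cons_cons_ofFn (hs : SkewCoeff ξ) (hs' : SkewCoeff ξ')
    (e3 : ∀ n1 n2 : ℕ, 0 < n2 → n2 < n1 →
      ξ (List.ofFn lam ++ [n1, n2]) = ξ' (List.ofFn lam ++ [n1, n2]))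
    {a b : ℕ} (ha : 0 < a) (hb : 0 < b) :
    ξ (a :: b :: List.ofFn lam) = ξ' (a :: b :: List.ofFn lam) := by
  rcases lt_trichotomy a b with h | rfl | h
  · exact hs.eq_of_perm hs' ((List.Perm.swap b a _).trans (List.perm_append_comm (l₁ := [b, a]))) (e3 b a ha h)
  · exact hs.eq_of_not_nodup hs' (by simp)
  · exact hs.eq_of_perm hs' (List.perm_append_comm (l₁ := [a, b])) (e3 a b hb h)

theorem eq_cons_eraseIdx_ofFn (hs : SkewCoeff ξ) (hs' : SkewCoeff ξ')
    (h0 : ∀ l : List ℕ, l.Nodup → l.sum < ∑ i, lam i → ξ l = 0)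
    (h0' : ∀ l : List ℕ, l.Nodup → l.sum < ∑ i, lam i → ξ' l = 0)
    (e1 : ∀ (i : Fin k) (n : ℕ), lam i < n →
      ξ ((List.ofFn lam).eraseIdx i ++ [n]) = ξ' ((List.ofFn lam).eraseIdx i ++ [n]))
    (i : Fin k) {n : ℕ} (hn : n ∉ List.ofFn lam) :
    ξ (n :: (List.ofFn lam).eraseIdx i) = ξ' (n :: (List.ofFn lam).eraseIdx i) := by
  have hne : lam i ≠ n := fun h => hn (List.mem_ofFn.2 ⟨i, h⟩)
  rcases hne.lt_or_gt with h | h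
  · exact hs.eq_of_perm hs' (List.perm_append_singleton n _).symm (e1 i n h)
  · refine eq_of_sum_lt hs hs' h0 h0' ?_
    have hsum := (List.getElem_cons_eraseIdx_perm (l := List.ofFn lam) (n := i) (by simp)).sum_eq
    rw [List.sum_cons, List.getElem_ofFn, Fin.eta, List.sum_ofFn] at hsum
    rw [List.sum_cons, ← hsum]
    omega

end InitialValues

section Relations

variable {R : Type*} [CommRing R] {ξ ξ' : List ℕ → R} {L : ℕ} {lam : Fin (2*L-1) → ℕ}

theorem eq_of_relA (hs : SkewCoeff ξ) (hs' : SkewCoeff ξ')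
    (hA : RelA L lam ξ) (hA' : RelA L lam ξ')
    (e2 : ∀ n : ℕ, 0 < n → ξ (List.ofFn lam ++ [n]) = ξ' (List.ofFn lam ++ [n]))
    {m : List ℕ}
    (ih : ∀ l : List ℕ, outsideWeight (List.ofFn lam) l < outsideWeight (List.ofFn lam) m →
      l.Nodup → (∀ x ∈ l, 0 < x) → ξ l = ξ' l)
    (hnd : m.Nodup) (hpos : ∀ x ∈ m, 0 < x) (heven : Even m.length) (hne : m ≠ []) :
    ξ m = ξ' m := by
  rw [hA m hnd hpos heven hne, hA' m hnd hpos heven hne]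
  refine Finset.sum_congr rfl fun i _ => ?_
  have hsub := m.eraseIdx_sublist i
  rw [eq_cons_ofFn hs hs' e2 (hpos _ (List.get_mem m i)),
    ih _ (outsideWeight_eraseIdx_lt i.isLt) (hsub.nodup hnd) fun x hx => hpos x (hsub.subset hx)]

theorem eq_of_relB (hs : SkewCoeff ξ) (hs' : SkewCoeff ξ')
    (hB : RelB L lam ξ) (hB' : RelB L lam ξ') (hlampos : ∀ i, 0 < lam i)
    (h0 : ∀ l : List ℕ, l.Nodup → l.sum < ∑ i, lam i → ξ l = 0)
    (h0' : ∀ l : List ℕ, l.Nodup → l.sum < ∑ i, lam i → ξ' l = 0)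
    (e1 : ∀ (i : Fin (2*L-1)) (n : ℕ), lam i < n →
      ξ ((List.ofFn lam).eraseIdx i ++ [n]) = ξ' ((List.ofFn lam).eraseIdx i ++ [n]))
    (e3 : ∀ n1 n2 : ℕ, 0 < n2 → n2 < n1 →
      ξ (List.ofFn lam ++ [n1, n2]) = ξ' (List.ofFn lam ++ [n1, n2]))
    {ns : List ℕ} {x : ℕ}
    (ih : ∀ l : List ℕ,
      outsideWeight (List.ofFn lam) l < outsideWeight (List.ofFn lam) (ns ++ [x]) →
      l.Nodup → (∀ y ∈ l, 0 < y) → ξ l = ξ' l)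
    (hnd : (ns ++ [x]).Nodup) (hpos : ∀ y ∈ ns ++ [x], 0 < y) (heven : Even ns.length)
    (hx : x ∉ List.ofFn lam) :
    ξ (ns ++ [x]) = ξ' (ns ++ [x]) := by
  have hns_nd : ns.Nodup := (List.nodup_append.1 hnd).1
  have hns_pos : ∀ y ∈ ns, 0 < y := fun y hy => hpos y (List.mem_append_left _ hy)
  rw [hB ns x hnd hpos heven, hB' ns x hnd hpos heven]
  congr 1
  · refine Finset.sum_congr rfl fun i _ => ?_
    have hsub := ns.eraseIdx_sublist i
    have hlt := (outsideWeight_eraseIdx_lt (lamL := List.ofFn lam) i.isLt).trans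
      (outsideWeight_lt_append_singleton ns x)
    rw [eq_cons_cons_ofFn hs hs' e3 (hns_pos _ (List.get_mem ns i)) (hpos x (by simp)),
      ih _ hlt (hsub.nodup hns_nd) fun y hy => hns_pos y (hsub.subset hy)]
  · refine Finset.sum_congr rfl fun i _ => ?_
    rw [eq_cons_eraseIdx_ofFn hs hs' h0 h0' e1 i hx]
    by_cases hnd_i : (ns ++ [lam i]).Nodup
    · have hlt := outsideWeight_append_singleton_lt hx (List.mem_ofFn.2 ⟨i, rfl⟩) ns
      have hpos_i : ∀ y ∈ ns ++ [lam i], 0 < y := by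
        simpa [or_imp, forall_and] using ⟨hns_pos, hlampos i⟩
      rw [ih _ hlt hnd_i hpos_i]
    · rw [hs.eq_of_not_nodup hs' hnd_i]

end Relations

theorem stmt16_general {R : Type*} [CommRing R] (L : ℕ)
    (lam : Fin (2*L-1) → ℕ)
    (hlampos : ∀ i, 1 ≤ lam i)
    (ξ ξ' : List ℕ → R) (hs : SkewCoeff ξ) (hs' : SkewCoeff ξ')
    (h1 : ξ (List.ofFn lam) = 1) (h1' : ξ' (List.ofFn lam) = 1)
    (h0 : ∀ l : List ℕ, l.Nodup → l.sum < ∑ i, lam i → ξ l = 0)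
    (h0' : ∀ l : List ℕ, l.Nodup → l.sum < ∑ i, lam i → ξ' l = 0)
    (hA : RelA L lam ξ) (hB : RelB L lam ξ)
    (hA' : RelA L lam ξ') (hB' : RelB L lam ξ')
    (e1 : ∀ (i : Fin (2*L-1)) (n : ℕ), lam i < n →
      ξ ((List.ofFn lam).eraseIdx i ++ [n]) = ξ' ((List.ofFn lam).eraseIdx i ++ [n]))
    (e2 : ∀ n : ℕ, 0 < n → ξ (List.ofFn lam ++ [n]) = ξ' (List.ofFn lam ++ [n]))
    (e3 : ∀ n1 n2 : ℕ, 0 < n2 → n2 < n1 →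
      ξ (List.ofFn lam ++ [n1, n2]) = ξ' (List.ofFn lam ++ [n1, n2])) :
    ∀ ns : List ℕ, ns.Nodup → (∀ x ∈ ns, 0 < x) → ξ ns = ξ' ns := by
  intro m
  induction m using (measure (outsideWeight (List.ofFn lam))).wf.induction with
  | _ m ih =>
    intro hnd hpos
    by_cases hsub : ∀ x ∈ m, x ∈ List.ofFn lam
    · exact eq_of_forall_mem_ofFn hs hs' hlampos h1 h1' h0 h0' hnd hsub
    push Not at hsub
    obtain ⟨x, hxm, hx⟩ := hsub
    rcases Nat.even_or_odd m.length with heven | hodd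
    · exact eq_of_relA hs hs' hA hA' e2 ih hnd hpos heven (List.ne_nil_of_mem hxm)
    · have hp : m.Perm (m.erase x ++ [x]) :=
        (List.perm_cons_erase hxm).trans (List.perm_append_singleton _ _).symm
      have heven : Even (m.erase x).length := by
        rw [List.length_erase_of_mem hxm]
        exact Nat.Odd.sub_odd hodd odd_one
      refine hs.eq_of_perm hs' hp (eq_of_relB hs hs' hB hB' hlampos h0 h0' e1 e3 ?_
        (hp.nodup_iff.1 hnd) (fun y hy => hpos y (hp.mem_iff.2 hy)) heven hx)
      exact fun l hl => ih l (hl.trans_eq (outsideWeight_perm hp).symm)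

/-- Uniqueness of the coefficients: two skew-symmetric families satisfying
`ξ_λ = 1`, `ξ_μ = 0` for `|μ| < |λ|`, the relations (A) and (B), and agreeing on
the initial data `ξ_{(λ_1,…,λ̂_i,…,λ_{2L-1},n)}` (`n > λ_i`),
`ξ_{(λ_1,…,λ_{2L-1},n)}` and `ξ_{(λ_1,…,λ_{2L-1},n_1,n_2)}`, agree on all
sequences of distinct positive integers. -/
theorem stmt16 {R : Type*} [CommRing R] (L : ℕ) (hL : 1 ≤ L)
    (lam : Fin (2*L-1) → ℕ)
    (hlam : ∀ i j : Fin (2*L-1), i < j → lam j < lam i) (hlampos : ∀ i, 1 ≤ lam i)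
    (ξ ξ' : List ℕ → R) (hs : SkewCoeff ξ) (hs' : SkewCoeff ξ')
    (h1 : ξ (List.ofFn lam) = 1) (h1' : ξ' (List.ofFn lam) = 1)
    (h0 : ∀ l : List ℕ, l.Nodup → l.sum < ∑ i, lam i → ξ l = 0)
    (h0' : ∀ l : List ℕ, l.Nodup → l.sum < ∑ i, lam i → ξ' l = 0)
    (hA : RelA L lam ξ) (hB : RelB L lam ξ)
    (hA' : RelA L lam ξ') (hB' : RelB L lam ξ')
    (e1 : ∀ (i : Fin (2*L-1)) (n : ℕ), lam i < n →
      ξ ((List.ofFn lam).eraseIdx i ++ [n]) = ξ' ((List.ofFn lam).eraseIdx i ++ [n]))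
    (e2 : ∀ n : ℕ, 0 < n → ξ (List.ofFn lam ++ [n]) = ξ' (List.ofFn lam ++ [n]))
    (e3 : ∀ n1 n2 : ℕ, 0 < n2 → n2 < n1 →
      ξ (List.ofFn lam ++ [n1, n2]) = ξ' (List.ofFn lam ++ [n1, n2])) :
    ∀ ns : List ℕ, ns.Nodup → (∀ x ∈ ns, 0 < x) → ξ ns = ξ' ns :=
  stmt16_general L lam hlampos ξ ξ' hs hs' h1 h1' h0 h0' hA hB hA' hB' e1 e2 e3
end

section
/- Vanishing below the threshold: let λ = (λ_1 > ··· > λ_{2L-1} ≥ 1), L ≥ 2, and suppose skew-symmetric coefficients ξ satisfy ξ_μ = 0 for |μ| < |λ|, ξ_λ = 1, and the relations (A) and (B) of the BKP addition formulae with respect to λ (as in the uniqueness statement). Then for every l < 2L-1 and all distinct positive integers n_1,...,n_l, ξ_{(n_1,...,n_l)} = 0. -/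
open Finset

lemma List.sum_eraseIdx_add_getElem {M : Type*} [AddCommMonoid M] (l : List M) {i : ℕ}
    (hi : i < l.length) : (l.eraseIdx i).sum + l[i] = l.sum := by
  rw [← (List.getElem_cons_eraseIdx_perm hi).sum_eq, List.sum_cons, add_comm]

lemma List.sum_eraseIdx_ofFn_add {M : Type*} [AddCommMonoid M] {n : ℕ} (f : Fin n → M)
    (i : Fin n) : ((List.ofFn f).eraseIdx i).sum + f i = ∑ j, f j := by
  simpa [List.sum_ofFn] using (List.ofFn f).sum_eraseIdx_add_getElem (i := i) (by simp)

lemma List.sum_lt_sum_of_subset_range {ι : Type*} [Fintype ι] {f : ι → ℕ}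
    (hf : Function.Injective f) (hpos : ∀ i, 0 < f i) {l : List ℕ} (hl : l.Nodup)
    (hsub : ∀ x ∈ l, x ∈ Set.range f) (hlen : l.length < Fintype.card ι) :
    l.sum < ∑ i, f i := by
  classical
  have hsub' : l.toFinset ⊆ univ.image f := fun x hx => by
    simpa using hsub x (List.mem_toFinset.mp hx)
  have hcard : l.toFinset.card < (univ.image f).card := by
    rwa [List.toFinset_card_of_nodup hl, card_image_of_injective _ hf, card_univ]
  obtain ⟨y, hy, hyl⟩ := exists_of_ssubset (hsub'.ssubset_of_ne (ne_of_apply_ne card hcard.ne))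
  obtain ⟨i, -, rfl⟩ := mem_image.mp hy
  calc l.sum = ∑ x ∈ l.toFinset, x := by rw [List.sum_toFinset _ hl, List.map_id']
    _ < ∑ x ∈ univ.image f, x :=
      sum_lt_sum_of_subset hsub' hy hyl (hpos i) fun _ _ _ => Nat.zero_le _
    _ = ∑ i, f i := sum_image fun _ _ _ _ h => hf h

section Vanishing

variable {R : Type*} [CommRing R] {ξ : List ℕ → R}

lemma SkewCoeff.apply_append_cons (hs : SkewCoeff ξ) (l₁ l₂ : List ℕ) (x : ℕ) :
    ξ (l₁ ++ x :: l₂) = (-1) ^ l₂.length * ξ (l₁ ++ l₂ ++ [x]) := by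
  induction l₂ generalizing l₁ with
  | nil => simp
  | cons b l₂ ih =>
    rw [hs.1, ← List.singleton_append, ← List.append_assoc, ih]
    simp [pow_succ]

def VanishesBelow (ξ : List ℕ → R) (n s : ℕ) : Prop :=
  ∀ l : List ℕ, l.sum < s → l.length < n → (∀ x ∈ l, 0 < x) → ξ l = 0

lemma vanishesBelow_of_step {n : ℕ}
    (step : ∀ l : List ℕ, VanishesBelow ξ n l.sum → l.length < n → (∀ x ∈ l, 0 < x) → ξ l = 0)
    (s : ℕ) : VanishesBelow ξ n s := by
  induction s with
  | zero => intro l hl; omega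
  | succ s ih =>
    intro l hl hlen hpos
    rcases Nat.lt_succ_iff_lt_or_eq.mp hl with hl | rfl
    · exact ih l hl hlen hpos
    · exact step l ih hlen hpos

lemma VanishesBelow.eraseIdx {n s : ℕ} (ih : VanishesBelow ξ n s) {l : List ℕ}
    (hsum : l.sum ≤ s) (hlen : l.length ≤ n) (hpos : ∀ x ∈ l, 0 < x) {i : ℕ}
    (hi : i < l.length) : ξ (l.eraseIdx i) = 0 := by
  have hsplit := l.sum_eraseIdx_add_getElem hi
  have hpos_i := hpos _ (l.getElem_mem hi)
  refine ih _ (by omega) ?_ fun x hx => hpos x ((List.eraseIdx_sublist l i).subset hx)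
  rw [List.length_eraseIdx_of_lt hi]
  omega

variable {L : ℕ} {lam : Fin (2*L-1) → ℕ}

lemma eq_zero_of_sum_lt (hs : SkewCoeff ξ)
    (h0 : ∀ l : List ℕ, l.Nodup → l.sum < ∑ i, lam i → ξ l = 0) {l : List ℕ}
    (hl : l.sum < ∑ i, lam i) : ξ l = 0 := by
  by_cases hnd : l.Nodup
  · exact h0 l hnd hl
  · exact hs.2 l hnd

lemma eq_zero_of_relA (hA : RelA L lam ξ) {l : List ℕ} (ih : VanishesBelow ξ (2*L-1) l.sum)
    (hlen : l.length < 2*L-1) (hnd : l.Nodup) (hpos : ∀ x ∈ l, 0 < x)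
    (heven : Even l.length) (hne : l ≠ []) : ξ l = 0 := by
  rw [hA l hnd hpos heven hne]
  refine sum_eq_zero fun i _ => ?_
  rw [ih.eraseIdx le_rfl hlen.le hpos i.isLt, mul_zero]

lemma eq_zero_of_relB (hs : SkewCoeff ξ)
    (h0 : ∀ l : List ℕ, l.Nodup → l.sum < ∑ i, lam i → ξ l = 0) (hB : RelB L lam ξ)
    (hlampos : ∀ i, 1 ≤ lam i) {l : List ℕ} {x : ℕ}
    (ih : VanishesBelow ξ (2*L-1) (l ++ [x]).sum) (hlen : (l ++ [x]).length < 2*L-1)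
    (hnd : (l ++ [x]).Nodup) (hpos : ∀ y ∈ l ++ [x], 0 < y) (heven : Even l.length)
    (hx : x ∉ Set.range lam) : ξ (l ++ [x]) = 0 := by
  have hsum : (l ++ [x]).sum = l.sum + x := by simp
  have hlen' : l.length + 1 < 2*L-1 := by simpa using hlen
  have hlpos : ∀ y ∈ l, 0 < y := fun y hy => hpos y (List.mem_append_left _ hy)
  rw [hB l x hnd hpos heven, sum_eq_zero, sum_eq_zero, add_zero]
  · intro i _
    rcases lt_or_gt_of_ne (fun h : x = lam i => hx ⟨i, h.symm⟩) with hlt | hgt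
    · have hsplit := List.sum_eraseIdx_ofFn_add lam i
      rw [eq_zero_of_sum_lt hs h0 (by simp only [List.sum_cons]; omega), mul_zero, zero_mul]
    · have hlam_pos : ∀ y ∈ l ++ [lam i], 0 < y := by
        simpa [or_imp, forall_and] using ⟨hlpos, hlampos i⟩
      rw [ih (l ++ [lam i]) (by simp; omega) (by simpa using hlen) hlam_pos, mul_zero]
  · intro i _
    rw [ih.eraseIdx (by omega) (by omega) hlpos i.isLt, mul_zero]

lemma eq_zero_of_mem_not_mem_range (hs : SkewCoeff ξ)
    (h0 : ∀ l : List ℕ, l.Nodup → l.sum < ∑ i, lam i → ξ l = 0) (hB : RelB L lam ξ)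
    (hlampos : ∀ i, 1 ≤ lam i) {l : List ℕ} (ih : VanishesBelow ξ (2*L-1) l.sum)
    (hlen : l.length < 2*L-1) (hnd : l.Nodup) (hpos : ∀ y ∈ l, 0 < y) (hodd : Odd l.length)
    {x : ℕ} (hxl : x ∈ l) (hx : x ∉ Set.range lam) : ξ l = 0 := by
  obtain ⟨l₁, l₂, rfl⟩ := List.append_of_mem hxl
  have hperm : (l₁ ++ l₂ ++ [x]).Perm (l₁ ++ x :: l₂) :=
    (List.perm_append_singleton x _).trans List.perm_middle.symm
  have heven : Even (l₁ ++ l₂).length := by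
    obtain ⟨k, hk⟩ := hodd
    exact ⟨k, by simp at hk ⊢; omega⟩
  rw [hs.apply_append_cons, eq_zero_of_relB hs h0 hB hlampos (hperm.sum_eq ▸ ih)
    (hperm.length_eq ▸ hlen) (hperm.nodup_iff.mpr hnd) (fun y hy => hpos y (hperm.subset hy))
    heven hx, mul_zero]

end Vanishing

theorem stmt17_general {R : Type*} [CommRing R] (L : ℕ)
    (lam : Fin (2*L-1) → ℕ)
    (hlam : ∀ i j : Fin (2*L-1), i < j → lam j < lam i) (hlampos : ∀ i, 1 ≤ lam i)
    (ξ : List ℕ → R) (hs : SkewCoeff ξ)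
    (h0 : ∀ l : List ℕ, l.Nodup → l.sum < ∑ i, lam i → ξ l = 0)
    (hA : RelA L lam ξ) (hB : RelB L lam ξ) :
    ∀ ns : List ℕ, ns.length < 2*L-1 → ns.Nodup → (∀ x ∈ ns, 0 < x) → ξ ns = 0 := by
  intro ns hlen _ hpos
  have hlam_sum_pos : 0 < ∑ i, lam i :=
    sum_pos (fun i _ => hlampos i) ⟨⟨0, by omega⟩, mem_univ _⟩
  refine vanishesBelow_of_step (fun l ih hlen hpos => ?_) (ns.sum + 1) ns (by omega) hlen hpos
  by_cases hnd : l.Nodup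
  swap
  · exact hs.2 l hnd
  rcases eq_or_ne l [] with rfl | hne
  · exact h0 [] List.nodup_nil hlam_sum_pos
  rcases Nat.even_or_odd l.length with heven | hodd
  · exact eq_zero_of_relA hA ih hlen hnd hpos heven hne
  by_cases hrange : ∀ x ∈ l, x ∈ Set.range lam
  · exact h0 l hnd <| List.sum_lt_sum_of_subset_range (StrictAnti.injective hlam) hlampos hnd
      hrange (by simpa using hlen)
  push Not at hrange
  obtain ⟨x, hxl, hx⟩ := hrange
  exact eq_zero_of_mem_not_mem_range hs h0 hB hlampos ih hlen hnd hpos hodd hxl hx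

/-- Vanishing below the threshold: if `λ = (λ_1 > ⋯ > λ_{2L-1} ≥ 1)`, `L ≥ 2`,
and a skew-symmetric family `ξ` satisfies `ξ_μ = 0` for `|μ| < |λ|`, `ξ_λ = 1`
and the relations (A) and (B), then `ξ_{(n_1,…,n_l)} = 0` for every `l < 2L-1`
and all distinct positive integers `n_1,…,n_l`. -/
theorem stmt17 {R : Type*} [CommRing R] (L : ℕ) (hL : 2 ≤ L)
    (lam : Fin (2*L-1) → ℕ)
    (hlam : ∀ i j : Fin (2*L-1), i < j → lam j < lam i) (hlampos : ∀ i, 1 ≤ lam i)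
    (ξ : List ℕ → R) (hs : SkewCoeff ξ)
    (h1 : ξ (List.ofFn lam) = 1)
    (h0 : ∀ l : List ℕ, l.Nodup → l.sum < ∑ i, lam i → ξ l = 0)
    (hA : RelA L lam ξ) (hB : RelB L lam ξ) :
    ∀ ns : List ℕ, ns.length < 2*L-1 → ns.Nodup → (∀ x ∈ ns, 0 < x) → ξ ns = 0 :=
  stmt17_general L lam hlam hlampos ξ hs h0 hA hB
end
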